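/- If G is a claw-free finite simple graph and H is any finite simple graph, then the 2-domination number of the Cartesian product satisfies γ_2(G □ H) ≥ γ(G)γ(H). -/

import Mathlib

open SimpleGraph Finset
open scoped Classical

/-- The closed neighborhood of `v` as a finset. -/
noncomputable def closedNbr {V : Type*} [Fintype V] (G : SimpleGraph V) (v : V) : Finset V :=
  Finset.univ.filter (fun u => u = v ∨ G.Adj u v)

/-- `S` is a dominating set of `G`. -/
def IsDomSet {V : Type*} (G : SimpleGraph V) (S : Finset V) : Prop :=
  ∀ v, v ∉ S → ∃ u ∈ S, G.Adj u v

/-- The domination number γ(G). -/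
noncomputable def domNum (V : Type*) [Fintype V] (G : SimpleGraph V) : ℕ :=
  sInf {n | ∃ S : Finset V, IsDomSet G S ∧ S.card = n}

/-- `S` is an independent dominating set of `G`. -/
def IsIndepDomSet {V : Type*} (G : SimpleGraph V) (S : Finset V) : Prop :=
  IsDomSet G S ∧ ∀ u ∈ S, ∀ v ∈ S, ¬ G.Adj u v

/-- The independent domination number i(G). -/
noncomputable def indepDomNum (V : Type*) [Fintype V] (G : SimpleGraph V) : ℕ :=
  sInf {n | ∃ S : Finset V, IsIndepDomSet G S ∧ S.card = n}

/-- `S` is a 2-dominating set of `G`. -/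
noncomputable def IsTwoDomSet {V : Type*} [Fintype V] (G : SimpleGraph V) (S : Finset V) : Prop :=
  ∀ v, v ∉ S → 2 ≤ (S.filter (fun u => G.Adj u v)).card

/-- The 2-domination number γ₂(G). -/
noncomputable def twoDomNum (V : Type*) [Fintype V] (G : SimpleGraph V) : ℕ :=
  sInf {n | ∃ S : Finset V, IsTwoDomSet G S ∧ S.card = n}

/-- `f` is a {k}-dominating function on `G`. -/
noncomputable def IsKDomFun {V : Type*} [Fintype V] (G : SimpleGraph V) (k : ℕ) (f : V → ℕ) : Prop :=
  (∀ v, f v ≤ k) ∧ ∀ v, k ≤ ∑ u ∈ closedNbr G v, f u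

/-- The {k}-domination number γ_{k}(G). -/
noncomputable def kDomNum (V : Type*) [Fintype V] (G : SimpleGraph V) (k : ℕ) : ℕ :=
  sInf {w | ∃ f : V → ℕ, IsKDomFun G k f ∧ w = ∑ v, f v}

/-- `f` is a weak {k}-dominating function on `G`. -/
noncomputable def IsWeakKDomFun {V : Type*} [Fintype V] (G : SimpleGraph V) (k : ℕ) (f : V → ℕ) : Prop :=
  (∀ v, f v ≤ k) ∧ ∀ v, f v = 0 → k ≤ ∑ u ∈ closedNbr G v, f u

/-- The weak {k}-domination number γ_{w{k}}(G). -/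
noncomputable def weakKDomNum (V : Type*) [Fintype V] (G : SimpleGraph V) (k : ℕ) : ℕ :=
  sInf {w | ∃ f : V → ℕ, IsWeakKDomFun G k f ∧ w = ∑ v, f v}

/-- `G` is claw-free: no induced K_{1,3}. -/
def ClawFree {V : Type*} (G : SimpleGraph V) : Prop :=
  ¬ ∃ v a b c : V, a ≠ b ∧ a ≠ c ∧ b ≠ c ∧
    G.Adj v a ∧ G.Adj v b ∧ G.Adj v c ∧ ¬ G.Adj a b ∧ ¬ G.Adj a c ∧ ¬ G.Adj b c

/-! Fix a maximal independent set `I` of `G`, so `γ(G) ≤ |I|`, and a 2-dominating set `D` of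
`G □ H`. For `g ∈ I`, the vertices `h` with `(g, h) ∉ D` that are not dominated inside the
`H`-fibre `{g} × W` need two `D`-neighbours in their `G`-layer `V × {h}`, hence in fibres over
`G`-neighbours of `g`. So `γ(H)` is at most the size of `D` on the fibre of `g` plus half the number
of points of `D` over neighbours of `g`. Summing over `g ∈ I`: a point of `D` over `I` is counted
once, and by claw-freeness a point over `V \ I` is adjacent to at most two vertices of `I`, so it
is counted at most twice with weight one half. Hence `|I| γ(H) ≤ |D|`. -/

section Domination

variable {V : Type*} [Fintype V] {G : SimpleGraph V}

theorem IsDomSet.domNum_le {S : Finset V} (hS : IsDomSet G S) : domNum V G ≤ #S :=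
  Nat.sInf_le ⟨S, hS, rfl⟩

theorem exists_isTwoDomSet_card_eq_twoDomNum (G : SimpleGraph V) :
    ∃ S, IsTwoDomSet G S ∧ #S = twoDomNum V G := by
  have hne : {n | ∃ S : Finset V, IsTwoDomSet G S ∧ #S = n}.Nonempty :=
    ⟨_, univ, fun v hv => absurd (mem_univ v) hv, rfl⟩
  exact Nat.sInf_mem hne

theorem exists_isIndepDomSet (G : SimpleGraph V) : ∃ I, IsIndepDomSet G I := by
  set indep : Finset (Finset V) := {I ∈ univ.powerset | ∀ u ∈ I, ∀ v ∈ I, ¬ G.Adj u v}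
  obtain ⟨I, hImem, hImax⟩ := exists_max_image indep card ⟨∅, by simp [indep]⟩
  have hIind := (mem_filter.1 hImem).2
  refine ⟨I, fun v hv => ?_, hIind⟩
  by_contra! hno
  have hins : insert v I ∈ indep := by
    simp only [indep, mem_filter, mem_powerset, subset_univ, true_and, mem_insert, forall_eq_or_imp,
      G.irrefl, not_false_eq_true]
    exact ⟨fun w hw h => hno w hw h.symm, fun u hu => ⟨hno u hu, hIind u hu⟩⟩
  have := hImax _ hins
  rw [card_insert_of_notMem hv] at this
  omega

end Domination

theorem ClawFree.card_filter_adj_le_two {V : Type*} {G : SimpleGraph V} (hG : ClawFree G)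
    {I : Finset V} (hI : ∀ u ∈ I, ∀ v ∈ I, ¬ G.Adj u v) (x : V) :
    #{g ∈ I | G.Adj x g} ≤ 2 := by
  by_contra! h
  obtain ⟨a, ha, b, hb, c, hc, hab, hac, hbc⟩ := two_lt_card.1 h
  simp only [mem_filter] at ha hb hc
  exact hG ⟨x, a, b, c, hab, hac, hbc, ha.2, hb.2, hc.2,
    hI a ha.1 b hb.1, hI a ha.1 c hc.1, hI b hb.1 c hc.1⟩

section BoxProd

variable {V W : Type*} (G : SimpleGraph V) {H : SimpleGraph W} (D : Finset (V × W))

noncomputable def fibreProj (g : V) : Finset W := {p ∈ D | p.1 = g}.image Prod.snd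

noncomputable def nbrFibres (g : V) : Finset (V × W) := {p ∈ D | G.Adj p.1 g}

/-- The `h` such that `(g, h)` has at least two `D`-neighbours in its `G`-layer `V × {h}`. -/
noncomputable def layerTwoDom [Fintype W] (g : V) : Finset W :=
  {h | 2 ≤ #{p ∈ nbrFibres G D g | p.2 = h}}

variable {G D}

theorem IsTwoDomSet.isDomSet_fibreProj_union [Fintype V] [Fintype W]
    (hD : IsTwoDomSet (G □ H) D) (g : V) : IsDomSet H (fibreProj D g ∪ layerTwoDom G D g) := by
  intro h hh
  rw [mem_union, not_or] at hh
  obtain ⟨hfibre, hlayer⟩ := hh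
  have hgh : (g, h) ∉ D := fun hmem =>
    hfibre (mem_image.2 ⟨(g, h), mem_filter.2 ⟨hmem, rfl⟩, rfl⟩)
  have hsplit : {p ∈ D | (G □ H).Adj p (g, h)} =
      {p ∈ nbrFibres G D g | p.2 = h} ∪ {p ∈ D | H.Adj p.2 h ∧ p.1 = g} := by
    ext p
    simp only [mem_filter, mem_union, nbrFibres, boxProd_adj]
    tauto
  have hfibre_nbr : 0 < #{p ∈ D | H.Adj p.2 h ∧ p.1 = g} := by
    have h2 := hD _ hgh
    rw [hsplit] at h2
    have := card_union_le {p ∈ nbrFibres G D g | p.2 = h} {p ∈ D | H.Adj p.2 h ∧ p.1 = g}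
    simp only [layerTwoDom, mem_filter, mem_univ, true_and] at hlayer
    omega
  obtain ⟨p, hp⟩ := card_pos.1 hfibre_nbr
  rw [mem_filter] at hp
  exact ⟨p.2, mem_union_left _ (mem_image.2 ⟨p, mem_filter.2 ⟨hp.1, hp.2.2⟩, rfl⟩), hp.2.1⟩

theorem two_mul_card_layerTwoDom_le [Fintype W] (g : V) :
    2 * #(layerTwoDom G D g) ≤ #(nbrFibres G D g) :=
  calc 2 * #(layerTwoDom G D g) = ∑ _h ∈ layerTwoDom G D g, 2 := by
        rw [sum_const, smul_eq_mul, mul_comm]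
    _ ≤ ∑ h ∈ layerTwoDom G D g, #{p ∈ nbrFibres G D g | p.2 = h} :=
        sum_le_sum fun _ hh => (mem_filter.1 hh).2
    _ ≤ ∑ h, #{p ∈ nbrFibres G D g | p.2 = h} := sum_le_sum_of_subset (subset_univ _)
    _ = #(nbrFibres G D g) := (card_eq_sum_card_fiberwise fun _ _ => mem_univ _).symm

theorem ClawFree.sum_card_nbrFibres_le (hG : ClawFree G) {I : Finset V}
    (hI : ∀ u ∈ I, ∀ v ∈ I, ¬ G.Adj u v) :
    ∑ g ∈ I, #(nbrFibres G D g) ≤ 2 * #{p ∈ D | p.1 ∉ I} :=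
  calc ∑ g ∈ I, #(nbrFibres G D g) = ∑ p ∈ D, #{g ∈ I | G.Adj p.1 g} :=
        sum_card_bipartiteAbove_eq_sum_card_bipartiteBelow
          (r := fun (g : V) (p : V × W) => G.Adj p.1 g)
    _ ≤ ∑ p ∈ D, if p.1 ∉ I then 2 else 0 := sum_le_sum fun p _ => by
        split_ifs with hp
        · simp [filter_eq_empty_iff.2 fun g hg => hI p.1 hp g hg]
        · exact hG.card_filter_adj_le_two hI p.1
    _ = 2 * #{p ∈ D | p.1 ∉ I} := by rw [← sum_filter, sum_const, smul_eq_mul, mul_comm]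

theorem IsTwoDomSet.domNum_mul_domNum_le_card [Fintype V] [Fintype W] (hG : ClawFree G)
    (hD : IsTwoDomSet (G □ H) D) : domNum V G * domNum W H ≤ #D := by
  obtain ⟨I, hIdom, hIind⟩ := exists_isIndepDomSet G
  have hfibre (g : V) : 2 * domNum W H ≤ 2 * #{p ∈ D | p.1 = g} + #(nbrFibres G D g) := by
    have h1 := (hD.isDomSet_fibreProj_union g).domNum_le
    have h2 := card_union_le (fibreProj D g) (layerTwoDom G D g)
    have h3 : #(fibreProj D g) ≤ #{p ∈ D | p.1 = g} := card_image_le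
    have h4 := two_mul_card_layerTwoDom_le (G := G) (D := D) g
    omega
  suffices 2 * (domNum V G * domNum W H) ≤ 2 * #D by omega
  calc 2 * (domNum V G * domNum W H) ≤ 2 * (#I * domNum W H) := by gcongr; exact hIdom.domNum_le
    _ = ∑ _g ∈ I, 2 * domNum W H := by rw [sum_const, smul_eq_mul]; ring
    _ ≤ ∑ g ∈ I, (2 * #{p ∈ D | p.1 = g} + #(nbrFibres G D g)) := sum_le_sum fun g _ => hfibre g
    _ = 2 * #{p ∈ D | p.1 ∈ I} + ∑ g ∈ I, #(nbrFibres G D g) := by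
        rw [sum_add_distrib, ← mul_sum, sum_card_fiberwise_eq_card_filter D I Prod.fst]
    _ ≤ 2 * #{p ∈ D | p.1 ∈ I} + 2 * #{p ∈ D | p.1 ∉ I} := by
        gcongr
        exact hG.sum_card_nbrFibres_le hIind
    _ = 2 * #D := by rw [← mul_add, card_filter_add_card_filter_not]

end BoxProd

theorem stmt8 {V W : Type*} [Fintype V] [Fintype W]
    (G : SimpleGraph V) (H : SimpleGraph W) (hG : ClawFree G) :
    domNum V G * domNum W H ≤ twoDomNum (V × W) (G □ H) := by
  obtain ⟨D, hD, hcard⟩ := exists_isTwoDomSet_card_eq_twoDomNum (G □ H)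
  exact hcard ▸ hD.domNum_mul_domNum_le_card hG
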